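/- Let g ≥ 1 and let w be an element of the free group F_{2g} on 2g generators such that the presented group F_{2g}/⟪w⟫ (the quotient by the normal closure of w) is isomorphic to the genus-g surface group Π_g. Then w is not conjugate in F_{2g} to any element of a subgroup generated by a proper subset of the 2g free generators; equivalently, the cyclically reduced form of w contains every one of the 2g generators. -/

import Mathlib

/-! `F/⟪w⟫` and `Π_g` are told apart by the cup product `H¹ × H¹ → H²` with coefficients in a
nontrivial commutative ring `R`, read off from the Heisenberg group: the pair `(α, β) : G → R²`
lifts through the central extension `R → Heisenberg R → R²` exactly when `α ⌣ β = 0`. On `Π_g`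
this pairing is the nondegenerate symplectic form `∑ α(aᵢ) β(bᵢ) - α(bᵢ) β(aᵢ)`. If a conjugate
`u w u⁻¹` avoids the generator `xᵢ`, then the class dual to `xᵢ` cups to zero with every `β`: send
`xᵢ ↦ (1, β xᵢ, 0)` and every other generator `x ↦ (0, β x, 0)`; the image of `u w u⁻¹` lies on the
`y`-axis, where it is determined by `β (u w u⁻¹) = 1`, so `w` dies and the map descends to
`F/⟪w⟫`. -/

/-- The generator `aᵢ` of the surface group, in the free group on `2g` generators. -/
def sgenA (g : ℕ) (i : Fin g) : FreeGroup (Fin (2 * g)) :=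
  FreeGroup.of ⟨2 * (i : ℕ), by have := i.isLt; omega⟩

/-- The generator `bᵢ` of the surface group. -/
def sgenB (g : ℕ) (i : Fin g) : FreeGroup (Fin (2 * g)) :=
  FreeGroup.of ⟨2 * (i : ℕ) + 1, by have := i.isLt; omega⟩

open scoped commutatorElement

/-- The genus-`g` surface group `Π_g`, presented with generators
`a₁, b₁, …, a_g, b_g` and the single relator `[a₁,b₁]⋯[a_g,b_g]`. -/
def SurfaceGroup (g : ℕ) : Type :=
  PresentedGroup ({(List.ofFn fun i : Fin g => ⁅sgenA g i, sgenB g i⁆).prod} :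
    Set (FreeGroup (Fin (2 * g))))

instance (g : ℕ) : Group (SurfaceGroup g) :=
  inferInstanceAs (Group (PresentedGroup _))

-- `⟨x, y, z⟩` is the unitriangular matrix `[[1, x, z], [0, 1, y], [0, 0, 1]]`.
@[ext]
structure Heisenberg (R : Type*) where
  x : R
  y : R
  z : R

namespace Heisenberg

variable {R : Type*} [CommRing R]

instance : Mul (Heisenberg R) := ⟨fun p q => ⟨p.x + q.x, p.y + q.y, p.z + q.z + p.x * q.y⟩⟩
instance : One (Heisenberg R) := ⟨⟨0, 0, 0⟩⟩
instance : Inv (Heisenberg R) := ⟨fun p => ⟨-p.x, -p.y, -p.z + p.x * p.y⟩⟩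

@[simp] lemma mul_x (p q : Heisenberg R) : (p * q).x = p.x + q.x := rfl
@[simp] lemma mul_y (p q : Heisenberg R) : (p * q).y = p.y + q.y := rfl
@[simp] lemma mul_z (p q : Heisenberg R) : (p * q).z = p.z + q.z + p.x * q.y := rfl
@[simp] lemma one_x : (1 : Heisenberg R).x = 0 := rfl
@[simp] lemma one_y : (1 : Heisenberg R).y = 0 := rfl
@[simp] lemma one_z : (1 : Heisenberg R).z = 0 := rfl
@[simp] lemma inv_x (p : Heisenberg R) : p⁻¹.x = -p.x := rfl
@[simp] lemma inv_y (p : Heisenberg R) : p⁻¹.y = -p.y := rfl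
@[simp] lemma inv_z (p : Heisenberg R) : p⁻¹.z = -p.z + p.x * p.y := rfl

instance : Group (Heisenberg R) where
  mul_assoc p q r := by ext <;> simp <;> ring
  one_mul p := by ext <;> simp
  mul_one p := by ext <;> simp
  inv_mul_cancel p := by ext <;> simp

@[simps]
def fstHom : Heisenberg R →* Multiplicative R where
  toFun p := .ofAdd p.x
  map_one' := rfl
  map_mul' _ _ := rfl

@[simps]
def sndHom : Heisenberg R →* Multiplicative R where
  toFun p := .ofAdd p.y
  map_one' := rfl
  map_mul' _ _ := rfl

def centerHom : Multiplicative R →* Heisenberg R where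
  toFun t := ⟨0, 0, t.toAdd⟩
  map_one' := rfl
  map_mul' _ _ := by ext <;> simp

@[simps]
def sndIncl : Multiplicative R →* Heisenberg R where
  toFun t := ⟨0, t.toAdd, 0⟩
  map_one' := rfl
  map_mul' _ _ := by ext <;> simp

lemma centerHom_injective : Function.Injective (centerHom (R := R)) :=
  fun _ _ h => congrArg Heisenberg.z h

lemma commutatorElement_eq (p q : Heisenberg R) :
    ⁅p, q⁆ = centerHom (.ofAdd (p.x * q.y - q.x * p.y)) := by
  ext <;> simp [commutatorElement_def, centerHom]
  ring

end Heisenberg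

section CupProduct

variable {R : Type*} [CommRing R] {G H : Type*} [Group G] [Group H]

def IsHeisenbergLiftable (α β : G →* Multiplicative R) : Prop :=
  ∃ ρ : G →* Heisenberg R, Heisenberg.fstHom.comp ρ = α ∧ Heisenberg.sndHom.comp ρ = β

lemma IsHeisenbergLiftable.comp {α β : G →* Multiplicative R} (h : IsHeisenbergLiftable α β)
    (f : H →* G) : IsHeisenbergLiftable (α.comp f) (β.comp f) := by
  obtain ⟨ρ, rfl, rfl⟩ := h
  exact ⟨ρ.comp f, rfl, rfl⟩

variable (R G) in
def HasDegenerateCupProduct : Prop :=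
  ∃ α : G →* Multiplicative R, α ≠ 1 ∧ ∀ β, IsHeisenbergLiftable α β

lemma HasDegenerateCupProduct.of_mulEquiv (e : G ≃* H) (h : HasDegenerateCupProduct R G) :
    HasDegenerateCupProduct R H := by
  obtain ⟨α, hα, hlift⟩ := h
  refine ⟨α.comp e.symm.toMonoidHom, fun h1 => hα ?_, fun β => ?_⟩
  · ext x
    simpa using DFunLike.congr_fun h1 (e x)
  · simpa [MonoidHom.comp_assoc] using (hlift (β.comp e.toMonoidHom)).comp e.symm.toMonoidHom

end CupProduct

lemma FreeGroup.lift_mem_of_mem_closure {X M : Type*} [Group M] {f : X → M} {S : Set X}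
    {K : Subgroup M} (hf : ∀ l ∈ S, f l ∈ K) {v : FreeGroup X}
    (hv : v ∈ Subgroup.closure (FreeGroup.of '' S)) : FreeGroup.lift f v ∈ K := by
  have : Subgroup.closure (FreeGroup.of '' S) ≤ K.comap (FreeGroup.lift f) := by
    rw [Subgroup.closure_le]
    rintro _ ⟨l, hl, rfl⟩
    simpa using hf l hl
  exact this hv

theorem PresentedGroup.hasDegenerateCupProduct_of_conj_mem_closure {R X : Type*} [CommRing R]
    [Nontrivial R] {S : Set X} {i : X} (hi : i ∉ S) {w u : FreeGroup X}
    (hu : u * w * u⁻¹ ∈ Subgroup.closure (FreeGroup.of '' S)) :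
    HasDegenerateCupProduct R (PresentedGroup ({w} : Set (FreeGroup X))) := by
  classical
  let θ (β : PresentedGroup {w} →* Multiplicative R) (l : X) : Heisenberg R :=
    ⟨if l = i then 1 else 0, (β (.of l)).toAdd, 0⟩
  have hθ (β) : ∀ r ∈ ({w} : Set (FreeGroup X)), FreeGroup.lift (θ β) r = 1 := by
    simp only [Set.mem_singleton_iff, forall_eq]
    -- the generators in `S` go to the `y`-axis, on which `sndHom` is injective
    obtain ⟨t, ht⟩ : FreeGroup.lift (θ β) (u * w * u⁻¹) ∈ Heisenberg.sndIncl.range := by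
      refine FreeGroup.lift_mem_of_mem_closure
        (fun l hl => MonoidHom.mem_range.mpr ⟨β (.of l), ?_⟩) hu
      simp [θ, Heisenberg.sndIncl, show l ≠ i from fun h => hi (h ▸ hl)]
    have hsnd : Heisenberg.sndHom.comp (FreeGroup.lift (θ β)) = β.comp (PresentedGroup.mk _) :=
      FreeGroup.ext_hom _ _ fun l => by simp [θ, PresentedGroup.of]
    have ht1 : t = 1 := by
      simpa [← ht, PresentedGroup.one_of_mem (Set.mem_singleton w)] using
        DFunLike.congr_fun hsnd (u * w * u⁻¹)
    simpa [ht1] using ht.symm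
  let ρ β := PresentedGroup.toGroup (hθ β)
  have hfst (β) : Heisenberg.fstHom.comp (ρ β) = Heisenberg.fstHom.comp (ρ 1) := by
    ext l
    simp [ρ, θ]
  refine ⟨Heisenberg.fstHom.comp (ρ 1), fun h1 => ?_, fun β => ⟨ρ β, hfst β, ?_⟩⟩
  · simpa [ρ, θ] using DFunLike.congr_fun h1 (.of i)
  · ext l
    simp [ρ, θ]

namespace SurfaceGroup

variable {g : ℕ}

def idxA (i : Fin g) : Fin (2 * g) := ⟨2 * i, by omega⟩

def idxB (i : Fin g) : Fin (2 * g) := ⟨2 * i + 1, by omega⟩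

lemma idxA_inj {i j : Fin g} : idxA i = idxA j ↔ i = j := by
  simp [idxA, Fin.ext_iff]

lemma idxB_inj {i j : Fin g} : idxB i = idxB j ↔ i = j := by
  simp [idxB, Fin.ext_iff]

lemma idxA_ne_idxB (i j : Fin g) : idxA i ≠ idxB j := by
  simp only [idxA, idxB, ne_eq, Fin.ext_iff]
  omega

lemma exists_eq_idxA_or_eq_idxB (l : Fin (2 * g)) : ∃ i, l = idxA i ∨ l = idxB i := by
  refine ⟨⟨l / 2, by omega⟩, ?_⟩
  simp only [idxA, idxB, Fin.ext_iff]
  omega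

def relator (g : ℕ) : FreeGroup (Fin (2 * g)) :=
  (List.ofFn fun i : Fin g => ⁅sgenA g i, sgenB g i⁆).prod

def mk : FreeGroup (Fin (2 * g)) →* SurfaceGroup g := PresentedGroup.mk _

lemma mk_relator : mk (relator g) = 1 := PresentedGroup.one_of_mem rfl

def gen (l : Fin (2 * g)) : SurfaceGroup g := mk (.of l)

lemma ext_hom {M : Type*} [Group M] {φ ψ : SurfaceGroup g →* M}
    (h : ∀ l, φ (gen l) = ψ (gen l)) : φ = ψ :=
  PresentedGroup.ext h

def liftComm {M : Type*} [CommGroup M] (f : Fin (2 * g) → M) : SurfaceGroup g →* M :=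
  PresentedGroup.toGroup (f := f) <| by
    rintro r rfl
    simp [map_list_prod, List.map_ofFn, Function.comp_def, commutatorElement_def]

@[simp]
lemma liftComm_gen {M : Type*} [CommGroup M] (f : Fin (2 * g) → M) (l : Fin (2 * g)) :
    liftComm f (gen l) = f l :=
  PresentedGroup.toGroup.of _

variable {R : Type*} [CommRing R]

-- `⟨α ⌣ β, [Π_g]⟩`
def cupPairing (α β : SurfaceGroup g →* Multiplicative R) : R :=
  ∑ i, ((α (gen (idxA i))).toAdd * (β (gen (idxB i))).toAdd -
    (α (gen (idxB i))).toAdd * (β (gen (idxA i))).toAdd)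

lemma cupPairing_eq_zero_of_isHeisenbergLiftable {α β : SurfaceGroup g →* Multiplicative R}
    (h : IsHeisenbergLiftable α β) : cupPairing α β = 0 := by
  obtain ⟨ρ, rfl, rfl⟩ := h
  have hrel : ρ (mk (relator g)) = 1 := by rw [mk_relator, map_one]
  simp only [relator, map_list_prod, List.map_ofFn, Function.comp_def, map_commutatorElement,
    Heisenberg.commutatorElement_eq] at hrel
  rw [← Function.comp_def Heisenberg.centerHom, ← List.map_ofFn, ← map_list_prod,
    ← map_one Heisenberg.centerHom] at hrel
  have := Heisenberg.centerHom_injective hrel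
  rw [List.prod_ofFn] at this
  simpa [cupPairing, gen, mk, sgenA, sgenB, idxA, idxB, Finset.sum_sub_distrib] using
    congrArg Multiplicative.toAdd this

def dual (t : Fin (2 * g)) : SurfaceGroup g →* Multiplicative R :=
  liftComm fun l => .ofAdd (if l = t then 1 else 0)

lemma cupPairing_dual_idxB (α : SurfaceGroup g →* Multiplicative R) (i : Fin g) :
    cupPairing α (dual (idxB i)) = (α (gen (idxA i))).toAdd := by
  simp [cupPairing, dual, idxB_inj, idxA_ne_idxB]

lemma cupPairing_dual_idxA (α : SurfaceGroup g →* Multiplicative R) (i : Fin g) :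
    cupPairing α (dual (idxA i)) = -(α (gen (idxB i))).toAdd := by
  simp [cupPairing, dual, idxA_inj, (idxA_ne_idxB _ _).symm]

theorem not_hasDegenerateCupProduct [Nontrivial R] :
    ¬ HasDegenerateCupProduct R (SurfaceGroup g) := by
  rintro ⟨α, hα, hlift⟩
  obtain ⟨l, hl⟩ : ∃ l, α (gen l) ≠ 1 := by
    by_contra! h
    exact hα (ext_hom h)
  obtain ⟨i, rfl | rfl⟩ := exists_eq_idxA_or_eq_idxB l
  · have := cupPairing_eq_zero_of_isHeisenbergLiftable (hlift (dual (idxB i)))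
    rw [cupPairing_dual_idxB] at this
    exact hl (toAdd_eq_zero.mp this)
  · have := cupPairing_eq_zero_of_isHeisenbergLiftable (hlift (dual (idxA i)))
    rw [cupPairing_dual_idxA, neg_eq_zero] at this
    exact hl (toAdd_eq_zero.mp this)

end SurfaceGroup

theorem stmt_11_general (g : ℕ) (w : FreeGroup (Fin (2 * g)))
    (hiso : Nonempty
      (PresentedGroup ({w} : Set (FreeGroup (Fin (2 * g)))) ≃* SurfaceGroup g)) :
    ∀ S : Set (Fin (2 * g)), S ≠ Set.univ →
      ∀ u : FreeGroup (Fin (2 * g)),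
        u * w * u⁻¹ ∉ Subgroup.closure (FreeGroup.of '' S) := by
  intro S hS u hu
  obtain ⟨i, hi⟩ := Set.ne_univ_iff_exists_notMem S |>.mp hS
  exact SurfaceGroup.not_hasDegenerateCupProduct
    ((PresentedGroup.hasDegenerateCupProduct_of_conj_mem_closure (R := ℤ) hi hu).of_mulEquiv
      hiso.some)

theorem stmt_11 (g : ℕ) (hg : 1 ≤ g) (w : FreeGroup (Fin (2 * g)))
    (hiso : Nonempty
      (PresentedGroup ({w} : Set (FreeGroup (Fin (2 * g)))) ≃* SurfaceGroup g)) :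
    ∀ S : Set (Fin (2 * g)), S ≠ Set.univ →
      ∀ u : FreeGroup (Fin (2 * g)),
        u * w * u⁻¹ ∉ Subgroup.closure (FreeGroup.of '' S) :=
  stmt_11_general g w hiso
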